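/- Let Σ be an alphabet of size m ≥ 3 and let n ≥ 1 be an integer. (a) For every regular language L over Σ with sc(L) ≤ n, sc(root(L)) ≤ n^n − n(n−1)/2. (b) This bound is tight: there exists a regular language L over Σ with sc(L) ≤ n and sc(root(L)) = n^n − n(n−1)/2. -/

import Mathlib

/-- `root L` = words some positive power of which lies in `L`. -/
def root {A : Type} (L : Language A) : Language A :=
  {w | ∃ m : ℕ, 1 ≤ m ∧ (List.replicate m w).flatten ∈ L}

/-- A language is regular if some DFA with finitely many states recognizes it. -/
def IsReg {A : Type} (L : Language A) : Prop :=
  ∃ (σ : Type) (_ : Fintype σ) (M : DFA A σ), M.accepts = L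

/-- The state complexity of a language: the least number of states of a DFA recognizing it. -/
noncomputable def sc {A : Type} (L : Language A) : ℕ :=
  sInf {m | ∃ (σ : Type) (_ : Fintype σ) (M : DFA A σ), M.accepts = L ∧ Fintype.card σ = m}

namespace Th324

variable {A σ : Type}

/-- The transformation of the state set induced by a word. -/
def wordFun (M : DFA A σ) (w : List A) : σ → σ := fun s => M.evalFrom s w

lemma wordFun_nil (M : DFA A σ) : wordFun M [] = id := rfl

lemma wordFun_append (M : DFA A σ) (u v : List A) :
    wordFun M (u ++ v) = wordFun M v ∘ wordFun M u := by
  funext s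
  exact M.evalFrom_of_append s u v

/-- Acceptance of a state transformation in the root automaton. -/
def Acc (M : DFA A σ) (k : σ → σ) : Prop := ∃ m, 1 ≤ m ∧ k^[m] M.start ∈ M.accept

/-- The equivalence used to quotient the root automaton. -/
def req (M : DFA A σ) (f g : σ → σ) : Prop :=
  ∀ h : σ → σ, (Acc M (h ∘ f) ↔ Acc M (h ∘ g))

def rSetoid (M : DFA A σ) : Setoid (σ → σ) where
  r := req M
  iseqv := ⟨fun _ _ => Iff.rfl, fun h1 h => (h1 h).symm, fun h1 h2 h => (h1 h).trans (h2 h)⟩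

lemma req_acc {M : DFA A σ} {f g : σ → σ} (h : req M f g) : Acc M f = Acc M g := by
  have := h id
  simpa using this

/-- The (quotiented) root automaton. -/
def rootDFA (M : DFA A σ) : DFA A (Quotient (rSetoid M)) where
  step q a := Quotient.map (fun f s => M.step (f s) a)
    (fun f g hfg h => by
      have h1 : (h ∘ fun s => M.step (f s) a) = (h ∘ fun s => M.step s a) ∘ f := rfl
      have h2 : (h ∘ fun s => M.step (g s) a) = (h ∘ fun s => M.step s a) ∘ g := rfl
      rw [h1, h2]
      exact hfg _) q
  start := ⟦id⟧
  accept := {q | Quotient.lift (Acc M) (fun _ _ hfg => req_acc hfg) q}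

lemma rootDFA_evalFrom (M : DFA A σ) (f : σ → σ) (w : List A) :
    (rootDFA M).evalFrom ⟦f⟧ w = ⟦wordFun M w ∘ f⟧ := by
  induction w generalizing f with
  | nil => simp [wordFun_nil, DFA.evalFrom]
  | cons a w ih =>
    have hh : (rootDFA M).evalFrom ⟦f⟧ (a :: w)
        = (rootDFA M).evalFrom ((rootDFA M).step ⟦f⟧ a) w := rfl
    rw [hh]
    have hstep : (rootDFA M).step ⟦f⟧ a = ⟦fun s => M.step (f s) a⟧ := rfl
    rw [hstep, ih]
    rfl

lemma evalFrom_replicate (M : DFA A σ) (w : List A) (m : ℕ) (s : σ) :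
    M.evalFrom s (List.replicate m w).flatten = (wordFun M w)^[m] s := by
  induction m generalizing s with
  | zero => simp [DFA.evalFrom]
  | succ m ih =>
    rw [List.replicate_succ, List.flatten_cons, M.evalFrom_of_append,
      Function.iterate_succ_apply]
    exact ih _

lemma mem_root_iff (M : DFA A σ) (w : List A) :
    w ∈ root M.accepts ↔ Acc M (wordFun M w) := by
  constructor
  · rintro ⟨m, hm, hmem⟩
    refine ⟨m, hm, ?_⟩
    rw [DFA.mem_accepts] at hmem
    rwa [← evalFrom_replicate]
  · rintro ⟨m, hm, hmem⟩
    refine ⟨m, hm, ?_⟩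
    rw [DFA.mem_accepts, DFA.eval]
    rwa [evalFrom_replicate]

lemma rootDFA_accepts (M : DFA A σ) : (rootDFA M).accepts = root M.accepts := by
  ext w
  rw [DFA.mem_accepts, mem_root_iff]
  have hh : (rootDFA M).eval w = ⟦wordFun M w⟧ := by
    have := rootDFA_evalFrom M id w
    exact this
  rw [hh]
  exact Iff.rfl

/-- If we have `card ι` disjoint equivalent pairs, the quotient loses at least `card ι`. -/
lemma card_quot_add_le {α ι : Type} [Fintype α] (s : Setoid α) [Fintype ι]
    [Fintype (Quotient s)]
    (u v : ι → α) (hu : Function.Injective u) (huv : ∀ i j, u i ≠ v j)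
    (hequiv : ∀ i, s.r (u i) (v i)) :
    Fintype.card (Quotient s) + Fintype.card ι ≤ Fintype.card α := by
  classical
  have key : ∀ q : Quotient s, ∃ x, Quotient.mk s x = q ∧ x ∉ Set.range u := by
    intro q
    obtain ⟨x, hx⟩ := Quotient.exists_rep q
    by_cases hxu : x ∈ Set.range u
    · obtain ⟨i, rfl⟩ := hxu
      refine ⟨v i, ?_, fun ⟨j, hj⟩ => huv j i hj⟩
      rw [← hx]
      exact Quotient.sound (Setoid.symm (hequiv i))
    · exact ⟨x, hx, hxu⟩
  choose rep hrep hrepu using key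
  have hrepinj : Function.Injective rep := by
    intro q q' h
    rw [← hrep q, ← hrep q', h]
  set R : Finset α := Finset.univ.image rep with hR
  set U : Finset α := Finset.univ.image u with hU
  have hcardR : R.card = Fintype.card (Quotient s) := by
    rw [hR, Finset.card_image_of_injective _ hrepinj, Finset.card_univ]
  have hcardU : U.card = Fintype.card ι := by
    rw [hU, Finset.card_image_of_injective _ hu, Finset.card_univ]
  have hdisj : Disjoint R U := by
    rw [Finset.disjoint_left]
    rintro x hxR hxU
    rw [hR, Finset.mem_image] at hxR
    obtain ⟨q, _, rfl⟩ := hxR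
    rw [hU, Finset.mem_image] at hxU
    obtain ⟨i, _, hi⟩ := hxU
    exact hrepu q ⟨i, hi⟩
  calc Fintype.card (Quotient s) + Fintype.card ι = (R ∪ U).card := by
        rw [Finset.card_union_of_disjoint hdisj, hcardR, hcardU]
    _ ≤ Finset.univ.card := Finset.card_le_univ _
    _ = Fintype.card α := rfl

/-- Padding a DFA with extra dead states. -/
def padDFA (M : DFA A σ) (k : ℕ) : DFA A (σ ⊕ Fin k) where
  step x a := match x with
    | .inl s => .inl (M.step s a)
    | .inr _ => .inl M.start
  start := .inl M.start
  accept := Sum.inl '' M.accept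

lemma padDFA_evalFrom (M : DFA A σ) (k : ℕ) (s : σ) (w : List A) :
    (padDFA M k).evalFrom (.inl s) w = .inl (M.evalFrom s w) := by
  induction w generalizing s with
  | nil => rfl
  | cons a w ih => exact ih (M.step s a)

lemma padDFA_accepts (M : DFA A σ) (k : ℕ) :
    (padDFA M k).accepts = M.accepts := by
  ext w
  rw [DFA.mem_accepts, DFA.mem_accepts]
  have hh : (padDFA M k).eval w = .inl (M.eval w) := padDFA_evalFrom M k M.start w
  rw [hh]
  constructor
  · rintro ⟨s, hs, heq⟩
    cases heq
    exact hs
  · intro h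
    exact ⟨M.eval w, h, rfl⟩

-- generic iteration helpers
lemma iter_stable (k : σ → σ) (q x : σ) (h1 : k q = x) (h2 : k x = x) :
    ∀ m, 1 ≤ m → k^[m] q = x := by
  intro m hm
  obtain ⟨m', rfl⟩ : ∃ m', m = m' + 1 := ⟨m - 1, by omega⟩
  clear hm
  induction m' with
  | zero => simpa using h1
  | succ m' ih => rw [Function.iterate_succ_apply', ih, h2]

lemma iter_two (k : σ → σ) (q x : σ) (h1 : k q = x) (h2 : k x = q) :
    ∀ m, k^[m] q = q ∨ k^[m] q = x := by
  intro m
  induction m with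
  | zero => exact Or.inl rfl
  | succ m ih =>
    rw [Function.iterate_succ_apply']
    rcases ih with h | h
    · rw [h, h1]; exact Or.inr rfl
    · rw [h, h2]; exact Or.inl rfl

section Pairs
variable [DecidableEq σ]

/-- maps `q0` to `a`, everything else to `b`. -/
def pf (q0 a b : σ) : σ → σ := fun x => if x = q0 then a else b

/-- maps `q0` and `x0` to `b`, everything else to `a`. -/
def pw (q0 x0 a b : σ) : σ → σ := fun x => if x = q0 ∨ x = x0 then b else a

lemma acc1 (M : DFA A σ) (hq0 : M.start ∈ M.accept) (a b : σ) (h : σ → σ) :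
    Acc M (h ∘ pf M.start a b) ↔ (h a ∈ M.accept ∨ h b ∈ M.accept) := by
  set k := h ∘ pf M.start a b with hk
  have hk0 : k M.start = h a := by simp [hk, pf]
  have him : ∀ y, k y = h a ∨ k y = h b := by
    intro y
    by_cases hy : y = M.start <;> simp [hk, pf, hy]
  constructor
  · rintro ⟨m, hm, hmem⟩
    obtain ⟨m', rfl⟩ : ∃ m', m = m' + 1 := ⟨m - 1, by omega⟩
    rw [Function.iterate_succ_apply'] at hmem
    rcases him (k^[m'] M.start) with h' | h' <;> rw [h'] at hmem
    · exact Or.inl hmem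
    · exact Or.inr hmem
  · intro hor
    by_cases hha : h a ∈ M.accept
    · exact ⟨1, le_refl 1, by simpa [hk0]⟩
    · have hhb : h b ∈ M.accept := hor.resolve_left hha
      have hne : h a ≠ M.start := fun he => hha (he ▸ hq0)
      refine ⟨2, by omega, ?_⟩
      have h2 : k^[2] M.start = k (k M.start) := by
        rw [Function.iterate_succ_apply', Function.iterate_one]
      rw [h2, hk0]
      have h3 : k (h a) = h b := by simp [hk, pf, hne]
      rwa [h3]

/-- common right-hand side for the `q0 ∉ F` case -/
def rhs2 (M : DFA A σ) (α β : σ) : Prop :=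
  β ≠ M.start ∧ ((α = M.start ∧ β ∈ M.accept) ∨ (α ≠ M.start ∧ (α ∈ M.accept ∨ β ∈ M.accept)))

lemma acc2u (M : DFA A σ) (hq0 : M.start ∉ M.accept) (a b : σ) (h : σ → σ) :
    Acc M (h ∘ pf M.start b a) ↔ rhs2 M (h a) (h b) := by
  set α := h a
  set β := h b
  set k := h ∘ pf M.start b a with hk
  have hk0 : k M.start = β := by simp [hk, pf]; rfl
  have hkx : ∀ y, y ≠ M.start → k y = α := by intro y hy; simp [hk, pf, hy]; rfl
  have him : ∀ y, k y = α ∨ k y = β := by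
    intro y
    by_cases hy : y = M.start
    · rw [hy, hk0]; exact Or.inr rfl
    · rw [hkx y hy]; exact Or.inl rfl
  constructor
  · rintro ⟨m, hm, hmem⟩
    have hβ : β ≠ M.start := by
      intro heq
      have hfix : k M.start = M.start := by rw [hk0, heq]
      rw [iter_stable k M.start M.start hfix hfix m hm] at hmem
      exact hq0 hmem
    refine ⟨hβ, ?_⟩
    by_cases hα : α = M.start
    · refine Or.inl ⟨hα, ?_⟩
      have h2 : k β = M.start := by rw [hkx β hβ, hα]
      rcases iter_two k M.start β hk0 h2 m with h' | h' <;> rw [h'] at hmem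
      · exact absurd hmem hq0
      · exact hmem
    · refine Or.inr ⟨hα, ?_⟩
      obtain ⟨m', rfl⟩ : ∃ m', m = m' + 1 := ⟨m - 1, by omega⟩
      rw [Function.iterate_succ_apply'] at hmem
      rcases him (k^[m'] M.start) with h' | h' <;> rw [h'] at hmem
      · exact Or.inl hmem
      · exact Or.inr hmem
  · rintro ⟨hβ, hor⟩
    rcases hor with ⟨hα, hβF⟩ | ⟨hα, hor2⟩
    · exact ⟨1, le_refl 1, by simpa [hk0]⟩
    · by_cases hβF : β ∈ M.accept
      · exact ⟨1, le_refl 1, by simpa [hk0]⟩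
      · have hαF : α ∈ M.accept := hor2.resolve_right hβF
        refine ⟨2, by omega, ?_⟩
        have h2 : k^[2] M.start = k (k M.start) := by
          rw [Function.iterate_succ_apply', Function.iterate_one]
        rw [h2, hk0, hkx β hβ]
        exact hαF

lemma acc2w (M : DFA A σ) (hq0 : M.start ∉ M.accept) (x0 : σ) (hx0 : x0 ∈ M.accept)
    (a b : σ) (h : σ → σ) :
    Acc M (h ∘ pw M.start x0 a b) ↔ rhs2 M (h a) (h b) := by
  set α := h a
  set β := h b
  set k := h ∘ pw M.start x0 a b with hk
  have hk0 : k M.start = β := by simp [hk, pw]; rfl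
  have hkx0 : k x0 = β := by simp [hk, pw]; rfl
  have hkx : ∀ y, y ≠ M.start → y ≠ x0 → k y = α := by
    intro y hy hy'
    simp [hk, pw, hy, hy']; rfl
  have him : ∀ y, k y = α ∨ k y = β := by
    intro y
    by_cases hy : y = M.start
    · subst hy; rw [hk0]; exact Or.inr rfl
    · by_cases hy' : y = x0
      · subst hy'; rw [hkx0]; exact Or.inr rfl
      · rw [hkx y hy hy']; exact Or.inl rfl
  constructor
  · rintro ⟨m, hm, hmem⟩
    have hβ : β ≠ M.start := by
      intro heq
      have hfix : k M.start = M.start := by rw [hk0, heq]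
      rw [iter_stable k M.start M.start hfix hfix m hm] at hmem
      exact hq0 hmem
    refine ⟨hβ, ?_⟩
    by_cases hα : α = M.start
    · refine Or.inl ⟨hα, ?_⟩
      by_cases hβx : β = x0
      · rw [hβx]; exact hx0
      · have h2 : k β = M.start := by rw [hkx β hβ hβx, hα]
        rcases iter_two k M.start β hk0 h2 m with h' | h' <;> rw [h'] at hmem
        · exact absurd hmem hq0
        · exact hmem
    · refine Or.inr ⟨hα, ?_⟩
      obtain ⟨m', rfl⟩ : ∃ m', m = m' + 1 := ⟨m - 1, by omega⟩
      rw [Function.iterate_succ_apply'] at hmem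
      rcases him (k^[m'] M.start) with h' | h' <;> rw [h'] at hmem
      · exact Or.inl hmem
      · exact Or.inr hmem
  · rintro ⟨hβ, hor⟩
    rcases hor with ⟨hα, hβF⟩ | ⟨hα, hor2⟩
    · exact ⟨1, le_refl 1, by simpa [hk0]⟩
    · by_cases hβF : β ∈ M.accept
      · exact ⟨1, le_refl 1, by simpa [hk0]⟩
      · have hαF : α ∈ M.accept := hor2.resolve_right hβF
        have hβx : β ≠ x0 := fun he => hβF (he ▸ hx0)
        refine ⟨2, by omega, ?_⟩
        have h2 : k^[2] M.start = k (k M.start) := by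
          rw [Function.iterate_succ_apply', Function.iterate_one]
        rw [h2, hk0, hkx β hβ hβx]
        exact hαF

end Pairs

lemma arith1 (n : ℕ) (hn : 1 ≤ n) : 1 + n * (n - 1) / 2 ≤ n ^ n := by
  obtain ⟨k, rfl⟩ : ∃ k, n = k + 1 := ⟨n - 1, by omega⟩
  rcases Nat.eq_zero_or_pos k with rfl | hk
  · simp
  · have h1 : (k + 1) * (k + 1 - 1) / 2 ≤ (k + 1) * k := by
      simpa using Nat.div_le_self ((k + 1) * k) 2
    have h2 : (k + 1) * (k + 1) ≤ (k + 1) ^ (k + 1) := by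
      calc (k + 1) * (k + 1) = (k + 1) ^ 2 := (sq (k + 1)).symm
        _ ≤ (k + 1) ^ (k + 1) := Nat.pow_le_pow_right (by omega) (by omega)
    nlinarith [h1, h2]

/-- key counting bound for the quotiented root automaton -/
lemma card_quot_bound [Fintype σ] (M : DFA A σ) [Fintype (Quotient (rSetoid M))] :
    Fintype.card (Quotient (rSetoid M)) + (Fintype.card σ) * (Fintype.card σ - 1) / 2
      ≤ (Fintype.card σ) ^ (Fintype.card σ) := by
  classical
  have hσpos : 0 < Fintype.card σ := Fintype.card_pos_iff.mpr ⟨M.start⟩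
  have hcardfun : Fintype.card (σ → σ) = (Fintype.card σ) ^ (Fintype.card σ) :=
    Fintype.card_fun
  by_cases hF : M.accept = ∅
  · have hsub : Subsingleton (Quotient (rSetoid M)) := by
      constructor
      intro q q'
      induction q using Quotient.ind
      induction q' using Quotient.ind
      apply Quotient.sound
      intro h
      constructor <;>
        · rintro ⟨m, hm, hmem⟩
          rw [hF] at hmem
          exact absurd hmem (Set.notMem_empty _)
    have h1 : Fintype.card (Quotient (rSetoid M)) ≤ 1 :=
      Fintype.card_le_one_iff_subsingleton.mpr hsub
    have h2 := arith1 (Fintype.card σ) hσpos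
    omega
  · obtain ⟨x0, hx0⟩ := Set.nonempty_iff_ne_empty.mpr hF
    have hex : ∀ i : {s : Finset σ // s.card = 2}, ∃ p : σ × σ, p.1 ≠ p.2 ∧ i.1 = {p.1, p.2} := by
      intro i
      obtain ⟨a, b, hab, hs⟩ := Finset.card_eq_two.mp i.2
      exact ⟨(a, b), hab, hs⟩
    choose pr hne hset using hex
    have hpairs : Fintype.card {s : Finset σ // s.card = 2}
        = (Fintype.card σ) * (Fintype.card σ - 1) / 2 := by
      rw [Fintype.card_finset_len, Nat.choose_two_right]
    have hother : ∀ i : {s : Finset σ // s.card = 2}, ∃ x : σ, x ≠ M.start := by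
      intro i
      by_cases h1 : (pr i).1 = M.start
      · exact ⟨(pr i).2, fun h2 => hne i (h1.trans h2.symm)⟩
      · exact ⟨(pr i).1, h1⟩
    by_cases hq0 : M.start ∈ M.accept
    · set u : {s : Finset σ // s.card = 2} → (σ → σ) :=
        fun i => pf M.start (pr i).1 (pr i).2 with hu_def
      set v : {s : Finset σ // s.card = 2} → (σ → σ) :=
        fun i => pf M.start (pr i).2 (pr i).1 with hv_def
      have hu : Function.Injective u := by
        intro i j hij
        have h1 : (pr i).1 = (pr j).1 := by
          have := congrFun hij M.start
          simpa [hu_def, pf] using this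
        obtain ⟨x, hx⟩ := hother i
        have h2 : (pr i).2 = (pr j).2 := by
          have := congrFun hij x
          simpa [hu_def, pf, hx] using this
        apply Subtype.ext
        rw [hset i, hset j, h1, h2]
      have huv : ∀ i j, u i ≠ v j := by
        intro i j hij
        have h1 : (pr i).1 = (pr j).2 := by
          have := congrFun hij M.start
          simpa [hu_def, hv_def, pf] using this
        obtain ⟨x, hx⟩ := hother i
        have h2 : (pr i).2 = (pr j).1 := by
          have := congrFun hij x
          simpa [hu_def, hv_def, pf, hx] using this
        have hij' : i = j := by
          apply Subtype.ext
          rw [hset i, hset j, h1, h2, Finset.pair_comm]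
        exact hne i (hij' ▸ h1)
      have hequiv : ∀ i, (rSetoid M).r (u i) (v i) := by
        intro i h
        rw [show u i = pf M.start (pr i).1 (pr i).2 from rfl,
          show v i = pf M.start (pr i).2 (pr i).1 from rfl,
          acc1 M hq0 (pr i).1 (pr i).2 h, acc1 M hq0 (pr i).2 (pr i).1 h]
        exact or_comm
      have hmain := card_quot_add_le (rSetoid M) u v hu huv hequiv
      rwa [hcardfun, hpairs] at hmain
    · set u : {s : Finset σ // s.card = 2} → (σ → σ) :=
        fun i => pf M.start (pr i).2 (pr i).1 with hu_def
      set v : {s : Finset σ // s.card = 2} → (σ → σ) :=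
        fun i => pw M.start x0 (pr i).1 (pr i).2 with hv_def
      have hx0q : x0 ≠ M.start := fun h => hq0 (h ▸ hx0)
      have hu : Function.Injective u := by
        intro i j hij
        have h1 : (pr i).2 = (pr j).2 := by
          have := congrFun hij M.start
          simpa [hu_def, pf] using this
        obtain ⟨x, hx⟩ := hother i
        have h2 : (pr i).1 = (pr j).1 := by
          have := congrFun hij x
          simpa [hu_def, pf, hx] using this
        apply Subtype.ext
        rw [hset i, hset j, h1, h2]
      have huv : ∀ i j, u i ≠ v j := by
        intro i j hij
        have h1 : (pr i).2 = (pr j).2 := by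
          have := congrFun hij M.start
          simpa [hu_def, hv_def, pf, pw] using this
        have h2 : (pr i).1 = (pr j).2 := by
          have := congrFun hij x0
          simpa [hu_def, hv_def, pf, pw, hx0q] using this
        exact hne i (h2.trans h1.symm)
      have hequiv : ∀ i, (rSetoid M).r (u i) (v i) := by
        intro i h
        rw [show u i = pf M.start (pr i).2 (pr i).1 from rfl,
          show v i = pw M.start x0 (pr i).1 (pr i).2 from rfl,
          acc2u M hq0 (pr i).1 (pr i).2 h, acc2w M hq0 x0 hx0 (pr i).1 (pr i).2 h]
      have hmain := card_quot_add_le (rSetoid M) u v hu huv hequiv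
      rwa [hcardfun, hpairs] at hmain

/-- Part (a). -/
theorem part_a {A : Type} (n : ℕ) (L : Language A) (hL : IsReg L) (hsc : sc L ≤ n) :
    sc (root L) + n * (n - 1) / 2 ≤ n ^ n := by
  classical
  obtain ⟨σ0, inst0, M0, hM0⟩ := hL
  have hSne : {m | ∃ (σ : Type) (_ : Fintype σ) (M : DFA A σ), M.accepts = L
      ∧ Fintype.card σ = m}.Nonempty :=
    ⟨Fintype.card σ0, σ0, inst0, M0, hM0, rfl⟩
  have hmem := Nat.sInf_mem hSne
  obtain ⟨σ, instF, M, hM, hcard⟩ := hmem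
  set M' := padDFA M (n - sc L) with hM'def
  have hcard' : Fintype.card (σ ⊕ Fin (n - sc L)) = n := by
    rw [Fintype.card_sum, Fintype.card_fin, hcard]
    change sc L + (n - sc L) = n
    omega
  haveI instQ : Fintype (Quotient (rSetoid M')) := Fintype.ofFinite _
  have hsc2 : sc (root L) ≤ Fintype.card (Quotient (rSetoid M')) := by
    apply Nat.sInf_le
    refine ⟨Quotient (rSetoid M'), instQ, rootDFA M', ?_, rfl⟩
    rw [rootDFA_accepts, hM'def, padDFA_accepts, hM]
  have hb := card_quot_bound M'
  rw [hcard'] at hb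
  omega

end Th324


namespace Th324B
open Th324


open Equiv

/-- merge: sends 1 to 0, fixes everything else -/
def mrg (m : ℕ) : Fin (m + 1) → Fin (m + 1) := fun s => if s = 1 then 0 else s

/-- moves x to y, fixes everything else -/
def mv {σ : Type} [DecidableEq σ] (x y : σ) : σ → σ := fun z => if z = x then y else z

def gens (m : ℕ) : Set (Function.End (Fin (m + 1))) :=
  {⇑(finRotate (m + 1)), ⇑(Equiv.swap (0 : Fin (m + 1)) 1), mrg m}

def K (m : ℕ) : Submonoid (Function.End (Fin (m + 1))) := Submonoid.closure (gens m)

def toEnd {m : ℕ} : Equiv.Perm (Fin (m + 1)) →* Function.End (Fin (m + 1)) :=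
  MulAction.toEndHom

lemma toEnd_eq {m : ℕ} (π : Equiv.Perm (Fin (m + 1))) : toEnd π = ⇑π := rfl

lemma pow_eq_coe {m : ℕ} (π : Equiv.Perm (Fin (m + 1))) (k : ℕ) :
    (toEnd π) ^ k = ⇑(π ^ k) := by
  rw [← toEnd_eq, ← map_pow]

def permSub (m : ℕ) : Subgroup (Equiv.Perm (Fin (m + 1))) where
  carrier := {π | toEnd π ∈ K m}
  one_mem' := by
    show toEnd 1 ∈ K m
    rw [map_one]
    exact (K m).one_mem
  mul_mem' := by
    intro a b ha hb
    show toEnd (a * b) ∈ K m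
    rw [map_mul]
    exact (K m).mul_mem ha hb
  inv_mem' := by
    intro a ha
    show toEnd a⁻¹ ∈ K m
    have hpos : 0 < orderOf a := orderOf_pos a
    have hinv : a⁻¹ = a ^ (orderOf a - 1) := by
      apply inv_eq_of_mul_eq_one_right
      rw [← pow_succ' a (orderOf a - 1), Nat.sub_add_cancel hpos]
      exact pow_orderOf_eq_one a
    rw [hinv, map_pow]
    exact pow_mem ha _

lemma perm_mem_K {m : ℕ} (π : Equiv.Perm (Fin (m + 1))) : ⇑π ∈ K m := by
  rw [← toEnd_eq]
  cases m with
  | zero =>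
    haveI hss : Subsingleton (Fin (0 + 1)) := ⟨fun a b => by fin_cases a <;> fin_cases b <;> rfl⟩
    have hπ : π = 1 := Equiv.ext fun x => Subsingleton.elim _ _
    rw [hπ]
    exact (permSub 0).one_mem
  | succ k =>
    have h0 : (finRotate (k + 2)) 0 = 1 := by
      rw [finRotate_succ_apply, zero_add]
    have hC := Equiv.Perm.closure_cycle_adjacent_swap (isCycle_finRotate (n := k))
      (support_finRotate (n := k)) (0 : Fin (k + 2))
    rw [h0] at hC
    have hle : Subgroup.closure ({finRotate (k + 2), Equiv.swap 0 1} :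
        Set (Equiv.Perm (Fin (k + 2)))) ≤ permSub (k + 1) := by
      rw [Subgroup.closure_le]
      rintro x (rfl | rfl)
      · exact Submonoid.subset_closure (Or.inl rfl)
      · exact Submonoid.subset_closure (Or.inr (Or.inl rfl))
    exact hle (hC ▸ Subgroup.mem_top π)

lemma mv_mem_K {m : ℕ} (x y : Fin (m + 1)) (hxy : x ≠ y) :
    (mv x y : Function.End (Fin (m + 1))) ∈ K m := by
  cases m with
  | zero =>
    haveI hss : Subsingleton (Fin (0 + 1)) := ⟨fun a b => by fin_cases a <;> fin_cases b <;> rfl⟩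
    exact absurd (Subsingleton.elim x y) hxy
  | succ k =>
    set s1 := Equiv.swap (0 : Fin (k + 2)) y with hs1
    set ρ := (Equiv.swap (s1 1) x) * s1 with hρ
    have h01 : (0 : Fin (k + 2)) ≠ 1 := Fin.zero_ne_one' (n := k + 1)
    have hs11y : s1 1 ≠ y := by
      intro h
      have : s1 1 = s1 0 := by rw [h, hs1, Equiv.swap_apply_left]
      exact h01.symm (s1.injective this)
    have hρ0 : ρ 0 = y := by
      show (Equiv.swap (s1 1) x) (s1 0) = y
      rw [hs1, Equiv.swap_apply_left]
      exact Equiv.swap_apply_of_ne_of_ne (Ne.symm hs11y) (Ne.symm hxy)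
    have hρ1 : ρ 1 = x := by
      show (Equiv.swap (s1 1) x) (s1 1) = x
      exact Equiv.swap_apply_left _ _
    have key : (mv x y : Function.End (Fin (k + 2))) = ⇑ρ ∘ mrg (k + 1) ∘ ⇑ρ⁻¹ := by
      funext z
      by_cases hz : z = x
      · subst hz
        have h1 : ρ⁻¹ z = 1 := by
          rw [Equiv.Perm.inv_def, Equiv.symm_apply_eq, hρ1]
        have lhs : mv z y z = y := by simp [mv]
        have rhs : (⇑ρ ∘ mrg (k + 1) ∘ ⇑ρ⁻¹) z = y := by
          simp only [Function.comp_apply, h1]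
          have hm : mrg (k + 1) 1 = 0 := by simp [mrg]
          rw [hm, hρ0]
        rw [lhs, rhs]
      · have h1 : ρ⁻¹ z ≠ 1 := by
          intro h
          apply hz
          rw [Equiv.Perm.inv_def, Equiv.symm_apply_eq] at h
          rw [h, hρ1]
        have lhs : mv x y z = z := if_neg hz
        have rhs : (⇑ρ ∘ mrg (k + 1) ∘ ⇑ρ⁻¹) z = z := by
          simp only [Function.comp_apply]
          have hm : mrg (k + 1) (ρ⁻¹ z) = ρ⁻¹ z := if_neg h1
          rw [hm]
          simp
        rw [lhs, rhs]
    have h1 : (⇑ρ : Function.End (Fin (k + 2))) ∈ K (k + 1) := perm_mem_K ρ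
    have h2 : (mrg (k + 1) : Function.End (Fin (k + 2))) ∈ K (k + 1) :=
      Submonoid.subset_closure (Or.inr (Or.inr rfl))
    have h3 : (⇑ρ⁻¹ : Function.End (Fin (k + 2))) ∈ K (k + 1) := perm_mem_K ρ⁻¹
    have := (K (k + 1)).mul_mem ((K (k + 1)).mul_mem h1 h2) h3
    rw [key]
    exact this


lemma all_mem_K {m : ℕ} (f : Fin (m + 1) → Fin (m + 1)) :
    (f : Function.End (Fin (m + 1))) ∈ K m := by
  classical
  suffices h : ∀ (k : ℕ) (f : Fin (m + 1) → Fin (m + 1)),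
      (m + 1) - (Finset.univ.image f).card ≤ k → (f : Function.End (Fin (m + 1))) ∈ K m by
    exact h (m + 1) f (by omega)
  intro k
  induction k with
  | zero =>
    intro f hf
    have hcard : (Finset.univ.image f).card = m + 1 := by
      have h1 : (Finset.univ.image f).card ≤ m + 1 := by
        have := Finset.card_le_univ (Finset.univ.image f)
        simpa using this
      omega
    have himg : Finset.univ.image f = Finset.univ :=
      Finset.eq_univ_of_card _ (by simpa using hcard)
    have hsurj : Function.Surjective f := by
      intro y
      have : y ∈ Finset.univ.image f := by rw [himg]; exact Finset.mem_univ y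
      obtain ⟨x, _, hx⟩ := Finset.mem_image.mp this
      exact ⟨x, hx⟩
    have hbij : Function.Bijective f := (Finite.surjective_iff_bijective).mp hsurj
    have : f = ⇑(Equiv.ofBijective f hbij) := rfl
    rw [this]
    exact perm_mem_K _
  | succ k ih =>
    intro f hf
    by_cases hinj : Function.Injective f
    · have hbij : Function.Bijective f := (Finite.injective_iff_bijective).mp hinj
      have : f = ⇑(Equiv.ofBijective f hbij) := rfl
      rw [this]
      exact perm_mem_K _
    · obtain ⟨x, y, hfxy, hxy⟩ : ∃ x y, f x = f y ∧ x ≠ y := by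
        simp only [Function.Injective, not_forall] at hinj
        obtain ⟨x, y, h1, h2⟩ := hinj
        exact ⟨x, y, h1, h2⟩
      have hnsurj : ¬ Function.Surjective f := fun hs =>
        hinj ((Finite.injective_iff_surjective).mpr hs)
      obtain ⟨c0, hc0⟩ : ∃ c0, ∀ z, f z ≠ c0 := by
        simp only [Function.Surjective, not_forall] at hnsurj
        obtain ⟨c0, hc⟩ := hnsurj
        exact ⟨c0, fun z hz => hc ⟨z, hz⟩⟩
      set f' := Function.update f x c0 with hf'
      have hdecomp : (f : Function.End (Fin (m + 1))) = fun z => f' (mv x y z) := by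
        funext z
        show f z = f' (mv x y z)
        by_cases hz : z = x
        · subst hz
          have h1 : mv z y z = y := by simp [mv]
          rw [h1, hf']
          rw [Function.update_of_ne (Ne.symm hxy)]
          exact hfxy
        · have h1 : mv x y z = z := if_neg hz
          rw [h1, hf', Function.update_of_ne hz]
      have himage : Finset.univ.image f' = insert c0 (Finset.univ.image f) := by
        ext w
        simp only [Finset.mem_image, Finset.mem_insert, Finset.mem_univ, true_and]
        constructor
        · rintro ⟨z, hz⟩
          by_cases hzx : z = x
          · subst hzx
            rw [hf', Function.update_self] at hz
            exact Or.inl hz.symm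
          · rw [hf', Function.update_of_ne hzx] at hz
            exact Or.inr ⟨z, hz⟩
        · rintro (rfl | ⟨z, hz⟩)
          · exact ⟨x, by rw [hf', Function.update_self]⟩
          · by_cases hzx : z = x
            · subst hzx
              refine ⟨y, ?_⟩
              rw [hf', Function.update_of_ne (Ne.symm hxy), ← hfxy]
              exact hz
            · exact ⟨z, by rw [hf', Function.update_of_ne hzx]; exact hz⟩
      have hcard' : (Finset.univ.image f').card = (Finset.univ.image f).card + 1 := by
        rw [himage, Finset.card_insert_of_notMem]
        intro hmem
        obtain ⟨z, _, hz⟩ := Finset.mem_image.mp hmem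
        exact hc0 z hz
      have hmem' : (f' : Function.End (Fin (m + 1))) ∈ K m := by
        apply ih
        omega
      rw [hdecomp]
      exact (K m).mul_mem hmem' (mv_mem_K x y hxy)



section Witness

variable {A : Type}

open Classical in
/-- the witness DFA: three letters act as rotation, swap, merge. -/
noncomputable def W (m : ℕ) (e : Fin 3 ↪ A) : DFA A (Fin (m + 1)) where
  step s x := if x = e 0 then finRotate (m + 1) s
    else if x = e 1 then Equiv.swap (0 : Fin (m + 1)) 1 s
    else if x = e 2 then mrg m s else s
  start := 0
  accept := {0}

lemma exists_word (m : ℕ) (e : Fin 3 ↪ A) (f : Fin (m + 1) → Fin (m + 1)) :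
    ∃ w : List A, wordFun (W m e) w = f := by
  have h10 : e 1 ≠ e 0 := e.injective.ne (by decide)
  have h20 : e 2 ≠ e 0 := e.injective.ne (by decide)
  have h21 : e 2 ≠ e 1 := e.injective.ne (by decide)
  have hf := all_mem_K (m := m) f
  induction hf using Submonoid.closure_induction with
  | mem x hx =>
    rcases hx with rfl | rfl | rfl
    · refine ⟨[e 0], ?_⟩
      funext s
      show (W m e).step s (e 0) = _
      simp [W]
    · refine ⟨[e 1], ?_⟩
      funext s
      show (W m e).step s (e 1) = _
      simp [W, h10]
    · refine ⟨[e 2], ?_⟩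
      funext s
      show (W m e).step s (e 2) = _
      simp [W, h20, h21]
  | one => exact ⟨[], rfl⟩
  | mul x y hx hy ihx ihy =>
    obtain ⟨wx, hwx⟩ := ihx
    obtain ⟨wy, hwy⟩ := ihy
    refine ⟨wy ++ wx, ?_⟩
    rw [wordFun_append, hwx, hwy]
    rfl

lemma accW_iff (m : ℕ) (e : Fin 3 ↪ A) (k : Fin (m + 1) → Fin (m + 1)) :
    Acc (W m e) k ↔ ∃ mm, 1 ≤ mm ∧ k^[mm] (0 : Fin (m + 1)) = 0 := by
  unfold Th324.Acc
  constructor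
  · rintro ⟨mm, h1, h2⟩
    exact ⟨mm, h1, h2⟩
  · rintro ⟨mm, h1, h2⟩
    exact ⟨mm, h1, h2⟩

lemma notAcc_of_trap (m : ℕ) (e : Fin 3 ↪ A) (k : Fin (m + 1) → Fin (m + 1)) (x : Fin (m + 1))
    (hx : x ≠ 0) (h1 : k 0 = x) (h2 : k x = x) : ¬ Acc (W m e) k := by
  rw [accW_iff]
  rintro ⟨mm, hmm, hmem⟩
  rw [iter_stable k 0 x h1 h2 mm hmm] at hmem
  exact hx hmem

lemma acc_of_two (m : ℕ) (e : Fin 3 ↪ A) (k : Fin (m + 1) → Fin (m + 1)) (x : Fin (m + 1))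
    (h1 : k 0 = x) (h2 : k x = 0) : Acc (W m e) k := by
  rw [accW_iff]
  refine ⟨2, by omega, ?_⟩
  have h3 : k^[2] (0 : Fin (m + 1)) = k (k 0) := by
    rw [Function.iterate_succ_apply', Function.iterate_one]
  rw [h3, h1, h2]

lemma acc_of_fix (m : ℕ) (e : Fin 3 ↪ A) (k : Fin (m + 1) → Fin (m + 1))
    (h1 : k 0 = 0) : Acc (W m e) k := by
  rw [accW_iff]
  exact ⟨1, le_refl 1, by simpa using h1⟩

/-- Exact structure of equivalent pairs for the witness automaton. -/
lemma L3 (m : ℕ) (e : Fin 3 ↪ A) (f g : Fin (m + 1) → Fin (m + 1)) (hne : f ≠ g)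
    (heq : ∀ h, Acc (W m e) (h ∘ f) ↔ Acc (W m e) (h ∘ g)) :
    ∃ a b : Fin (m + 1), a ≠ b ∧ f = pf (0 : Fin (m + 1)) a b ∧ g = pf (0 : Fin (m + 1)) b a := by
  classical
  by_cases hpr : f 0 = g 0
  · exfalso
    obtain ⟨x, hx⟩ := Function.ne_iff.mp hne
    have hx0 : x ≠ 0 := fun h => hx (by rw [h, hpr])
    by_cases hpfx : f 0 = f x
    · set h : Fin (m + 1) → Fin (m + 1) := fun y => if y = g x then (0 : Fin (m + 1)) else x
        with hh
      have hf0ne : f 0 ≠ g x := by rw [hpfx]; exact hx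
      have hgacc : Acc (W m e) (h ∘ g) := by
        apply acc_of_two m e _ x
        · show h (g 0) = x
          rw [← hpr]
          exact if_neg hf0ne
        · show h (g x) = 0
          exact if_pos rfl
      have hfnot : ¬ Acc (W m e) (h ∘ f) := by
        apply notAcc_of_trap m e _ x hx0
        · show h (f 0) = x
          exact if_neg hf0ne
        · show h (f x) = x
          rw [← hpfx]
          exact if_neg hf0ne
      exact hfnot ((heq h).mpr hgacc)
    · set h : Fin (m + 1) → Fin (m + 1) := fun y => if y = f x then (0 : Fin (m + 1)) else x
        with hh
      have hfacc : Acc (W m e) (h ∘ f) := by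
        apply acc_of_two m e _ x
        · show h (f 0) = x
          exact if_neg hpfx
        · show h (f x) = 0
          exact if_pos rfl
      have hgnot : ¬ Acc (W m e) (h ∘ g) := by
        apply notAcc_of_trap m e _ x hx0
        · show h (g 0) = x
          rw [← hpr]
          exact if_neg hpfx
        · show h (g x) = x
          exact if_neg (fun hgf => hx hgf.symm)
      exact hgnot ((heq h).mp hfacc)
  · by_cases hz1 : ∃ z, z ≠ (0 : Fin (m + 1)) ∧ g z ≠ f 0
    · exfalso
      obtain ⟨z, hz0, hzp⟩ := hz1
      set h : Fin (m + 1) → Fin (m + 1) := fun y => if y = f 0 then (0 : Fin (m + 1)) else z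
        with hh
      have hfacc : Acc (W m e) (h ∘ f) := by
        apply acc_of_fix m e
        show h (f 0) = 0
        exact if_pos rfl
      have hgnot : ¬ Acc (W m e) (h ∘ g) := by
        apply notAcc_of_trap m e _ z hz0
        · show h (g 0) = z
          exact if_neg (fun hgf => hpr hgf.symm)
        · show h (g z) = z
          exact if_neg hzp
      exact hgnot ((heq h).mp hfacc)
    · by_cases hz2 : ∃ z, z ≠ (0 : Fin (m + 1)) ∧ f z ≠ g 0
      · exfalso
        obtain ⟨z, hz0, hzp⟩ := hz2
        set h : Fin (m + 1) → Fin (m + 1) := fun y => if y = g 0 then (0 : Fin (m + 1)) else z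
          with hh
        have hgacc : Acc (W m e) (h ∘ g) := by
          apply acc_of_fix m e
          show h (g 0) = 0
          exact if_pos rfl
        have hfnot : ¬ Acc (W m e) (h ∘ f) := by
          apply notAcc_of_trap m e _ z hz0
          · show h (f 0) = z
            exact if_neg hpr
          · show h (f z) = z
            exact if_neg hzp
        exact hfnot ((heq h).mpr hgacc)
      · push_neg at hz1 hz2
        refine ⟨f 0, g 0, hpr, ?_, ?_⟩
        · funext z
          show f z = if z = 0 then f 0 else g 0
          by_cases hz : z = 0
          · rw [if_pos hz, hz]
          · rw [if_neg hz]
            exact hz2 z hz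
        · funext z
          show g z = if z = 0 then g 0 else f 0
          by_cases hz : z = 0
          · rw [if_pos hz, hz]
          · rw [if_neg hz]
            exact hz1 z hz

/-- Part (b): the witness language. -/
lemma part_b {A : Type} [Fintype A] (hA : 3 ≤ Fintype.card A) (m : ℕ) :
    ∃ L : Language A, IsReg L ∧ sc L ≤ (m + 1) ∧
      sc (root L) + (m + 1) * ((m + 1) - 1) / 2 = (m + 1) ^ (m + 1) := by
  classical
  obtain ⟨e⟩ : Nonempty (Fin 3 ↪ A) :=
    Function.Embedding.nonempty_of_card_le (by simpa using hA)
  set L := (W m e).accepts with hL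
  have hreg : IsReg L := ⟨Fin (m + 1), inferInstance, W m e, rfl⟩
  have hscL : sc L ≤ m + 1 := Nat.sInf_le ⟨Fin (m + 1), inferInstance, W m e, rfl, by simp⟩
  have hup := Th324.part_a (m + 1) L hreg hscL
  -- the pairs and the excluded map of each pair
  have hex : ∀ i : {s : Finset (Fin (m + 1)) // s.card = 2},
      ∃ p : (Fin (m + 1)) × (Fin (m + 1)), p.1 ≠ p.2 ∧ i.1 = {p.1, p.2} := by
    intro i
    obtain ⟨a, b, hab, hs⟩ := Finset.card_eq_two.mp i.2
    exact ⟨(a, b), hab, hs⟩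
  choose pr hne hset using hex
  set vmap : {s : Finset (Fin (m + 1)) // s.card = 2} → (Fin (m + 1) → Fin (m + 1)) :=
    fun i => pf (0 : Fin (m + 1)) (pr i).2 (pr i).1 with hvmap
  have hother : ∀ i : {s : Finset (Fin (m + 1)) // s.card = 2}, ∃ x : Fin (m + 1), x ≠ 0 := by
    intro i
    by_cases h1 : (pr i).1 = 0
    · exact ⟨(pr i).2, fun h2 => hne i (h1.trans h2.symm)⟩
    · exact ⟨(pr i).1, h1⟩
  have hvinj : Function.Injective vmap := by
    intro i j hij
    have h1 : (pr i).2 = (pr j).2 := by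
      have := congrFun hij 0
      simpa [hvmap, pf] using this
    obtain ⟨x, hx⟩ := hother i
    have h2 : (pr i).1 = (pr j).1 := by
      have := congrFun hij x
      simpa [hvmap, pf, hx] using this
    apply Subtype.ext
    rw [hset i, hset j, h1, h2]
  have hcardΩ : Fintype.card {f : Fin (m + 1) → Fin (m + 1) // f ∉ Set.range vmap}
      = (m + 1) ^ (m + 1) - (m + 1) * ((m + 1) - 1) / 2 := by
    rw [Fintype.card_subtype_compl]
    congr 1
    · simp [Fintype.card_fun]
    · have h1 : Fintype.card {x // x ∈ Set.range vmap}
          = Fintype.card {s : Finset (Fin (m + 1)) // s.card = 2} :=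
        Fintype.card_congr (Equiv.ofInjective vmap hvinj).symm
      rw [h1, Fintype.card_finset_len, Nat.choose_two_right]
      simp
  have hword : ∀ f : Fin (m + 1) → Fin (m + 1), ∃ w, wordFun (W m e) w = f :=
    exists_word m e
  choose wd hwd using hword
  haveI instQ : Fintype (Quotient (rSetoid (W m e))) := Fintype.ofFinite _
  have hSne : {mm | ∃ (τ : Type) (_ : Fintype τ) (N : DFA A τ), N.accepts = root L
      ∧ Fintype.card τ = mm}.Nonempty := by
    refine ⟨_, Quotient (rSetoid (W m e)), instQ, rootDFA (W m e), ?_, rfl⟩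
    rw [rootDFA_accepts]
  obtain ⟨τ, instτ, N, hN, hcardτ⟩ := Nat.sInf_mem hSne
  have hinj : Function.Injective
      (fun f : {f : Fin (m + 1) → Fin (m + 1) // f ∉ Set.range vmap} => N.eval (wd f.1)) := by
    intro f g hΦ
    simp only at hΦ
    apply Subtype.ext
    by_contra hfg
    have hreq : ∀ h, Acc (W m e) (h ∘ f.1) ↔ Acc (W m e) (h ∘ g.1) := by
      intro h
      have key : ∀ (u : List A) (ff : Fin (m + 1) → Fin (m + 1)), wordFun (W m e) u = ff →
          ((u ++ wd h) ∈ root L ↔ Acc (W m e) (h ∘ ff)) := by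
        intro u ff hu
        rw [hL, mem_root_iff, wordFun_append, hu, hwd h]
      have hfz := key (wd f.1) f.1 (hwd _)
      have hgz := key (wd g.1) g.1 (hwd _)
      rw [← hfz, ← hgz]
      have hNroot : ∀ u, u ∈ root L ↔ N.evalFrom N.start u ∈ N.accept := by
        intro u
        rw [← hN]
        exact Iff.rfl
      rw [hNroot, hNroot, DFA.evalFrom_of_append, DFA.evalFrom_of_append]
      have heval : N.evalFrom N.start (wd f.1) = N.evalFrom N.start (wd g.1) := hΦ
      rw [heval]
    obtain ⟨a, b, hab, hfa, hgb⟩ := L3 m e f.1 g.1 hfg hreq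
    set i : {s : Finset (Fin (m + 1)) // s.card = 2} := ⟨{a, b}, Finset.card_pair hab⟩
      with hi_def
    have hi : ({a, b} : Finset (Fin (m + 1))) = {(pr i).1, (pr i).2} := hset i
    have hmema : a = (pr i).1 ∨ a = (pr i).2 := by
      have : a ∈ ({(pr i).1, (pr i).2} : Finset (Fin (m + 1))) := by
        rw [← hi]
        simp
      simpa using this
    have hmemb : b = (pr i).1 ∨ b = (pr i).2 := by
      have : b ∈ ({(pr i).1, (pr i).2} : Finset (Fin (m + 1))) := by
        rw [← hi]
        simp
      simpa using this
    rcases hmema with ha | ha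
    · rcases hmemb with hb | hb
      · exact hab (ha.trans hb.symm)
      · -- (pr i) = (a, b): vmap i = pf 0 b a = g
        refine g.2 ⟨i, ?_⟩
        have hvi : vmap i = pf (0 : Fin (m + 1)) (pr i).2 (pr i).1 := rfl
        rw [hvi, hgb, hb, ha]
    · rcases hmemb with hb | hb
      · -- (pr i) = (b, a): vmap i = pf 0 a b = f
        refine f.2 ⟨i, ?_⟩
        have hvi : vmap i = pf (0 : Fin (m + 1)) (pr i).2 (pr i).1 := rfl
        rw [hvi, hfa, hb, ha]
      · exact hab (ha.trans hb.symm)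
  have hlow : (m + 1) ^ (m + 1) - (m + 1) * ((m + 1) - 1) / 2 ≤ sc (root L) := by
    rw [show sc (root L) = Fintype.card τ from hcardτ.symm, ← hcardΩ]
    exact Fintype.card_le_of_injective _ hinj
  refine ⟨L, hreg, hscL, ?_⟩
  set C := (m + 1) * ((m + 1) - 1) / 2
  set NN := (m + 1) ^ (m + 1)
  omega

end Witness

end Th324B

/-- **Theorem 3.24.** Over an alphabet of size `m ≥ 3`, every regular language `L` with
`sc L ≤ n` satisfies `sc (root L) ≤ n^n - n(n-1)/2`, and this bound is tight. -/
theorem theorem_3_24 {A : Type} [Fintype A] (hA : 3 ≤ Fintype.card A)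
    (n : ℕ) (hn : 1 ≤ n) :
    (∀ L : Language A, IsReg L → sc L ≤ n →
        sc (root L) + n * (n - 1) / 2 ≤ n ^ n) ∧
      ∃ L : Language A, IsReg L ∧ sc L ≤ n ∧
        sc (root L) + n * (n - 1) / 2 = n ^ n := by
  constructor
  · intro L hL hsc
    exact Th324.part_a n L hL hsc
  · obtain ⟨k, rfl⟩ : ∃ k, n = k + 1 := ⟨n - 1, by omega⟩
    exact Th324B.part_b hA k
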